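/- No deterministic extractor exists for reverse block sources (Theorem 3): for all b, N ∈ ℕ⁺, all 0 < δ < 1, and any function Ext : {0,1}^{bN} → {0,1}, there exists a classical (b,N,δ)-reverse block source X such that Pr[Ext(X) = 1] ≥ 2^{−δ} or Pr[Ext(X) = 1] ≤ 1 − 2^{−δ}. (Since 2^{−δ} > 1/2, the output is biased.) -/

import Mathlib

open Finset

/-- A probability mass function on a finite type. -/
def IsPmf {α : Type*} [Fintype α] (P : α → ℝ) : Prop :=
  (∀ x, 0 ≤ P x) ∧ ∑ x, P x = 1

/-- `P` is a classical `(b, M, δ)`-reverse block source (samples of `b` bits): for all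
`k ≤ i < M` and all assignments, the conditional min-entropy of blocks `k..i` given the
future is at least `(i-k+1)δb`, stated multiplicatively. -/
def IsRBS (b M : ℕ) (δ : ℝ) (P : (Fin M → (Fin b → Bool)) → ℝ) : Prop :=
  ∀ k i : ℕ, k ≤ i → i < M → ∀ xs z : Fin M → (Fin b → Bool),
    (∑ x ∈ univ.filter (fun x : Fin M → (Fin b → Bool) =>
        (∀ j : Fin M, k ≤ (j : ℕ) → (j : ℕ) ≤ i → x j = z j) ∧
        (∀ j : Fin M, i < (j : ℕ) → x j = xs j)), P x)
      ≤ (2 : ℝ) ^ (-((((i : ℝ) - k + 1)) * (δ * b))) *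
        (∑ x ∈ univ.filter (fun x : Fin M → (Fin b → Bool) =>
          ∀ j : Fin M, i < (j : ℕ) → x j = xs j), P x)

private def forcedEquiv {n : ℕ} {V : Type*} (p : Fin n → Prop) [DecidablePred p]
    (w : Fin n → V) :
    {x : Fin n → V // ∀ j, p j → x j = w j} ≃ ({j : Fin n // ¬ p j} → V) where
  toFun x j := x.1 j.1
  invFun y := ⟨fun j => if h : p j then w j else y ⟨j, h⟩, fun j hj => dif_pos hj⟩
  left_inv x := Subtype.ext (funext fun j => by
    by_cases h : p j
    · simp [h, x.2 j h]
    · simp [h])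
  right_inv y := funext fun j => by simp [j.2]

private lemma card_forced {n : ℕ} {V : Type*} [Fintype V] [DecidableEq V]
    (p : Fin n → Prop) [DecidablePred p] (w : Fin n → V) :
    (univ.filter (fun x : Fin n → V => ∀ j, p j → x j = w j)).card
      = Fintype.card V ^ (univ.filter (fun j => ¬ p j)).card := by
  rw [← Fintype.card_subtype, ← Fintype.card_subtype,
    Fintype.card_congr (forcedEquiv p w), Fintype.card_fun]

private lemma keyF (γ : ℝ) (hγ1 : 1/2 ≤ γ) (hγ2 : γ ≤ 1) :
    ∀ M : ℕ, 1 ≤ γ ^ M * ((2*γ-1) + (1-γ) * 2^(M+1))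
  | 0 => by norm_num; nlinarith
  | (M+1) => by
      have ih := keyF γ hγ1 hγ2 M
      have h2γ : (1:ℝ) ≤ (2*γ)^(M+1) := one_le_pow₀ (by linarith)
      have e : γ^(M+1) * ((2*γ-1) + (1-γ)*2^(M+2))
          = γ * (γ^M * ((2*γ-1) + (1-γ)*2^(M+1))) + (1-γ) * (2*γ)^(M+1) := by
        ring
      rw [e]
      nlinarith [pow_nonneg (by linarith : (0:ℝ) ≤ γ) M]

private lemma step9 (γ c d u : ℝ) (M : ℕ) (hM : 1 ≤ M) (hγ1 : 1/2 ≤ γ) (hγ2 : γ ≤ 1)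
    (hcd : c ≤ d) (hc2u : c ≤ 2*u) (hu : 0 ≤ u) :
    (2*γ-1)*c + (2-2*γ)*u ≤ γ^M * ((2*γ-1)*d + (2-2*γ)*(2^M*u)) := by
  obtain ⟨M, rfl⟩ : ∃ M', M = M' + 1 := ⟨M - 1, by omega⟩
  have key := keyF γ hγ1 hγ2 M
  have hγ0 : (0:ℝ) ≤ γ := by linarith
  have hG0 : (0:ℝ) ≤ γ^(M+1) := pow_nonneg hγ0 _
  have hG1 : γ^(M+1) ≤ 1 := pow_le_one₀ hγ0 hγ2
  have h1 : γ^(M+1) * ((2*γ-1)*c + (2-2*γ)*(2^(M+1)*u))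
      ≤ γ^(M+1) * ((2*γ-1)*d + (2-2*γ)*(2^(M+1)*u)) := by
    apply mul_le_mul_of_nonneg_left _ hG0
    nlinarith
  refine le_trans ?_ h1
  have hkey2 : γ ≤ γ^(M+1) * ((2*γ-1) + (1-γ)*2^(M+1)) := by
    have h := mul_le_mul_of_nonneg_left key hγ0
    calc γ = γ * 1 := by ring
    _ ≤ γ * (γ ^ M * (2 * γ - 1 + (1 - γ) * 2 ^ (M + 1))) := h
    _ = γ^(M+1) * ((2*γ-1) + (1-γ)*2^(M+1)) := by ring
  have hc : (2*γ-1)*c * (1 - γ^(M+1)) ≤ (2*γ-1)*(2*u) * (1 - γ^(M+1)) := by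
    apply mul_le_mul_of_nonneg_right _ (by linarith)
    exact mul_le_mul_of_nonneg_left hc2u (by linarith)
  nlinarith [mul_le_mul_of_nonneg_right hkey2 hu]

private lemma aux9 (b N : ℕ) (hb : 0 < b) (hN : 0 < N) (δ : ℝ) (hδ : 0 < δ) (hδ1 : δ < 1)
    (S : Finset (Fin N → Fin b → Bool)) (hS : 2 ^ (b * N) ≤ 2 * S.card) :
    ∃ P : (Fin N → Fin b → Bool) → ℝ, IsPmf P ∧ IsRBS b N δ P ∧
      (2:ℝ) ^ (-δ) ≤ ∑ x ∈ S, P x := by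
  classical
  set γ : ℝ := (2:ℝ) ^ (-δ) with hγdef
  have hγ2 : γ < 1 := Real.rpow_lt_one_of_one_lt_of_neg (by norm_num) (by linarith)
  have hγ1 : 1/2 < γ := by
    have h : (2:ℝ) ^ (-1:ℝ) < (2:ℝ) ^ (-δ) :=
      (Real.rpow_lt_rpow_left_iff (by norm_num)).2 (by linarith)
    rw [Real.rpow_neg_one] at h
    rw [hγdef]; linarith [h]
  set α : ℝ := 2*γ - 1 with hαdef
  have hα0 : 0 ≤ α := by rw [hαdef]; linarith
  have hα1 : α ≤ 1 := by rw [hαdef]; linarith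
  have hcardΩ : Fintype.card (Fin N → Fin b → Bool) = 2^(b*N) := by
    simp [Fintype.card_fun]; rw [← pow_mul]
  have h2pos : 0 < 2^(b*N) := pow_pos (by norm_num) (b*N)
  have hSpos : 0 < S.card := by omega
  have hScast : (0:ℝ) < (S.card : ℝ) := by exact_mod_cast hSpos
  have h2N : (0:ℝ) < (2:ℝ)^(b*N) := by positivity
  have hcast : (2:ℝ)^(b*N) ≤ 2*(S.card:ℝ) := by exact_mod_cast hS
  set P : (Fin N → Fin b → Bool) → ℝ :=
    fun x => (if x ∈ S then α / S.card else 0) + (1-α) / 2^(b*N) with hPdef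
  have hsum : ∀ T : Finset (Fin N → Fin b → Bool), ∑ x ∈ T, P x
      = ((T.filter (· ∈ S)).card : ℝ) * (α / S.card)
        + (T.card : ℝ) * ((1-α) / 2^(b*N)) := by
    intro T
    rw [hPdef]
    rw [Finset.sum_add_distrib, ← Finset.sum_filter, Finset.sum_const, Finset.sum_const]
    simp [nsmul_eq_mul]
  refine ⟨P, ⟨?_, ?_⟩, ?_, ?_⟩
  · intro x
    rw [hPdef]
    have h1 : (0:ℝ) ≤ (if x ∈ S then α / S.card else 0) := by
      split_ifs
      · positivity
      · exact le_rfl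
    have h2 : (0:ℝ) ≤ (1-α) / 2^(b*N) := by
      apply div_nonneg (by linarith) (by positivity)
    exact add_nonneg h1 h2
  · rw [hsum univ, filter_univ_mem, card_univ, hcardΩ]
    push_cast
    field_simp
    ring
  · -- IsRBS
    intro k i hki hiN xs z
    set m : ℕ := i + 1 - k with hm
    have hmk : k + m = i + 1 := by omega
    set A : Finset (Fin N → Fin b → Bool) := univ.filter (fun x =>
        (∀ j : Fin N, k ≤ (j:ℕ) → (j:ℕ) ≤ i → x j = z j) ∧
        (∀ j : Fin N, i < (j:ℕ) → x j = xs j)) with hAdef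
    set B : Finset (Fin N → Fin b → Bool) := univ.filter (fun x =>
        ∀ j : Fin N, i < (j:ℕ) → x j = xs j) with hBdef
    have hAcard : A.card = 2^(b*k) := by
      have he : A = univ.filter (fun x : Fin N → Fin b → Bool =>
          ∀ j : Fin N, k ≤ (j:ℕ) → x j = if (j:ℕ) ≤ i then z j else xs j) := by
        rw [hAdef]
        apply filter_congr
        intro x _
        constructor
        · rintro ⟨h1, h2⟩ j hkj
          split_ifs with hji
          · exact h1 j hkj hji
          · exact h2 j (by omega)
        · intro h
          refine ⟨fun j hkj hji => ?_, fun j hij => ?_⟩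
          · have hx := h j hkj; rwa [if_pos hji] at hx
          · have hx := h j (by omega); rwa [if_neg (by omega)] at hx
      rw [he, card_forced]
      have hfree : (univ.filter (fun j : Fin N => ¬ k ≤ (j:ℕ)))
          = Iio (⟨k, by omega⟩ : Fin N) := by
        ext j
        simp [Fin.lt_def]
      rw [hfree, Fin.card_Iio]
      have : Fintype.card (Fin b → Bool) = 2^b := by simp [Fintype.card_fun]
      rw [this, ← pow_mul]
    have hBcard : B.card = 2^(b*(i+1)) := by
      rw [hBdef]
      rw [show (univ.filter (fun x : Fin N → Fin b → Bool =>
          ∀ j : Fin N, i < (j:ℕ) → x j = xs j)).card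
        = Fintype.card (Fin b → Bool) ^
            (univ.filter (fun j : Fin N => ¬ i < (j:ℕ))).card from card_forced _ _]
      have hfree : (univ.filter (fun j : Fin N => ¬ i < (j:ℕ)))
          = Iic (⟨i, hiN⟩ : Fin N) := by
        ext j
        simp [Fin.le_def]
      rw [hfree, Fin.card_Iic]
      have : Fintype.card (Fin b → Bool) = 2^b := by simp [Fintype.card_fun]
      rw [this, ← pow_mul]
    have hAB : A ⊆ B := by
      rw [hAdef, hBdef]
      exact fun x hx => by simp only [mem_filter] at hx ⊢; exact ⟨hx.1, hx.2.2⟩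
    have hfAB : (A.filter (· ∈ S)).card ≤ (B.filter (· ∈ S)).card :=
      card_le_card (filter_subset_filter _ hAB)
    have hfA : (A.filter (· ∈ S)).card ≤ 2^(b*k) := hAcard ▸ card_filter_le A _
    -- the exponent
    have hexp : (2:ℝ) ^ (-(((i:ℝ) - k + 1) * (δ * b))) = γ ^ (m*b) := by
      have h1 : ((i:ℝ) - k + 1) = ((m:ℕ):ℝ) := by
        rw [hm]; push_cast [Nat.cast_sub (by omega : k ≤ i + 1)]; ring
      rw [h1, show (-(((m:ℕ):ℝ) * (δ * b))) = (-δ) * (((m*b : ℕ)):ℝ) by push_cast; ring,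
        Real.rpow_mul (by norm_num : (0:ℝ) ≤ 2), Real.rpow_natCast]
    rw [hsum A, hsum B, hAcard, hBcard, hexp]
    push_cast
    set a : ℝ := ((A.filter (· ∈ S)).card : ℝ) with hadef
    set dd : ℝ := ((B.filter (· ∈ S)).card : ℝ) with hdddef
    have ha0 : 0 ≤ a := by rw [hadef]; positivity
    have hadd : a ≤ dd := by rw [hadef, hdddef]; exact_mod_cast hfAB
    have hak : a ≤ (2:ℝ)^(b*k) := by
      rw [hadef]
      calc ((A.filter (· ∈ S)).card : ℝ) ≤ ((2^(b*k) : ℕ) : ℝ) := by exact_mod_cast hfA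
      _ = (2:ℝ)^(b*k) := by push_cast; ring
    have hM1 : 1 ≤ m * b := Nat.mul_pos (by omega) hb
    have hcd : a / S.card ≤ dd / S.card := by
      gcongr
    have hu : (0:ℝ) ≤ (2:ℝ)^(b*k) / 2^(b*N) := by positivity
    have hc2u : a / S.card ≤ 2 * ((2:ℝ)^(b*k) / 2^(b*N)) := by
      rw [show (2:ℝ) * ((2:ℝ)^(b*k) / 2^(b*N)) = (2*(2:ℝ)^(b*k)) / 2^(b*N) by ring,
        div_le_div_iff₀ hScast h2N]
      nlinarith [mul_le_mul hak hcast (by positivity : (0:ℝ) ≤ (2:ℝ)^(b*N))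
        (by positivity : (0:ℝ) ≤ (2:ℝ)^(b*k))]
    have hstep := step9 γ (a / S.card) (dd / S.card) ((2:ℝ)^(b*k) / 2^(b*N)) (m*b)
      hM1 (le_of_lt hγ1) (le_of_lt hγ2) hcd hc2u hu
    have hsplit : (2:ℝ)^(b*(i+1)) = 2^(m*b) * 2^(b*k) := by
      rw [← pow_add, show m*b + b*k = b*(i+1) from by rw [← hmk]; ring]
    calc a * (α / S.card) + (2:ℝ)^(b*k) * ((1-α) / 2^(b*N))
        = (2*γ-1) * (a / S.card) + (2-2*γ) * ((2:ℝ)^(b*k) / 2^(b*N)) := by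
          rw [hαdef]; ring
      _ ≤ γ^(m*b) * ((2*γ-1) * (dd / S.card)
            + (2-2*γ) * (2^(m*b) * ((2:ℝ)^(b*k) / 2^(b*N)))) := hstep
      _ = γ^(m*b) * (dd * (α / S.card) + (2:ℝ)^(b*(i+1)) * ((1-α) / 2^(b*N))) := by
          rw [hαdef, hsplit]; ring
  · -- the probability bound
    rw [hsum S, filter_true_of_mem (fun x hx => hx)]
    have e2 : (1-α)/2 ≤ (S.card:ℝ) * ((1-α) / 2^(b*N)) := by
      rw [show (S.card:ℝ) * ((1-α) / 2^(b*N)) = ((1-α) * S.card) / 2^(b*N) by ring,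
        div_le_div_iff₀ (by norm_num : (0:ℝ) < 2) h2N]
      have h3 : (1-α) * ((2:ℝ)^(b*N)) ≤ (1-α) * (2*(S.card:ℝ)) :=
        mul_le_mul_of_nonneg_left hcast (by linarith : (0:ℝ) ≤ 1 - α)
      have h4 : (1-α) * (2*(S.card:ℝ)) = (1-α)*(S.card:ℝ)*2 := by ring
      linarith
    have e1 : (S.card:ℝ) * (α / S.card) = α := by
      rw [mul_comm, div_mul_cancel₀ _ (ne_of_gt hScast)]
    rw [e1]
    rw [hαdef] at e2 ⊢
    linarith

/-- No deterministic extractor for reverse block sources (Theorem 3): for any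
`Ext : {0,1}^{bN} → {0,1}` there is a `(b,N,δ)`-reverse block source `X` with
`Pr[Ext(X)=1] ≥ 2^{-δ}` or `Pr[Ext(X)=1] ≤ 1 - 2^{-δ}`. -/
theorem stmt9 (b N : ℕ) (hb : 0 < b) (hN : 0 < N) (δ : ℝ) (hδ : 0 < δ) (hδ1 : δ < 1)
    (Ext : (Fin N → (Fin b → Bool)) → Bool) :
    ∃ P : (Fin N → (Fin b → Bool)) → ℝ, IsPmf P ∧ IsRBS b N δ P ∧
      ((2 : ℝ) ^ (-δ) ≤ ∑ x ∈ univ.filter (fun x => Ext x = true), P x ∨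
        ∑ x ∈ univ.filter (fun x => Ext x = true), P x ≤ 1 - (2 : ℝ) ^ (-δ)) := by
  classical
  by_cases hmaj : 2^(b*N) ≤ 2 * (univ.filter (fun x => Ext x = true)).card
  · obtain ⟨P, h1, h2, h3⟩ := aux9 b N hb hN δ hδ hδ1 _ hmaj
    exact ⟨P, h1, h2, Or.inl h3⟩
  · have hcardΩ : Fintype.card (Fin N → Fin b → Bool) = 2^(b*N) := by
      simp [Fintype.card_fun]; rw [← pow_mul]
    have hsplitc := Finset.card_filter_add_card_filter_not
      (s := (univ : Finset (Fin N → Fin b → Bool))) (p := fun x => Ext x = true)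
    rw [card_univ, hcardΩ] at hsplitc
    have hmaj' : 2^(b*N) ≤ 2 * (univ.filter (fun x => ¬ Ext x = true)).card := by omega
    obtain ⟨P, h1, h2, h3⟩ := aux9 b N hb hN δ hδ hδ1 _ hmaj'
    refine ⟨P, h1, h2, Or.inr ?_⟩
    have hs := Finset.sum_filter_add_sum_filter_not univ (fun x => Ext x = true) P
    rw [h1.2] at hs
    linarith
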